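/- Let R > 1, N ≥ 1, α > 1. Define a base distribution on two-token strings by p(a,⋆) = 1/(1+R) and p(b,i) = R/(N(1+R)) for i = 1,…,N (all other strings have probability 0). Let A be the event that the first token is a. Then under local (low-temperature) sharpening, Φ(A) = 1/(1+R^α), and under global (power) sharpening, Π(A) = 1/(1 + R^α/N^{α−1}). -/

import Mathlib

/-!
Power sharpening `p ↦ p ^ α` is multiplicatively homogeneous, so the common normalizer `1 + R`
cancels from both sharpened probabilities. Locally the `b`-branch keeps its whole mass `R`,
which becomes `R ^ α`; globally it is split into `N` strings of mass `R / N`, whose sharpened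
total is `N * (R / N) ^ α = R ^ α / N ^ (α - 1)`.
-/

open Real

lemma one_div_rpow_div_add_div_rpow {c : ℝ} (hc : 0 < c) (α u : ℝ) :
    (1 / c) ^ α / ((1 / c) ^ α + u / c ^ α) = 1 / (1 + u) := by
  rw [div_rpow zero_le_one hc.le, one_rpow, ← add_div,
    div_div_div_cancel_right₀ (rpow_pos_of_pos hc α).ne']

lemma mul_rpow_div_mul {n x c : ℝ} (hn : 0 < n) (hx : 0 ≤ x) (hc : 0 ≤ c) (α : ℝ) :
    n * (x / (n * c)) ^ α = x ^ α / n ^ (α - 1) / c ^ α := by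
  rw [div_rpow hx (mul_nonneg hn.le hc), mul_rpow hn.le hc, rpow_sub_one hn.ne']
  field_simp

theorem local_vs_global_sharpening_general (R : ℝ) (N : ℕ) (α : ℝ)
    (hR : 1 < R) (hN : 1 ≤ N) :
    (1 / (1 + R)) ^ α / ((1 / (1 + R)) ^ α + (R / (1 + R)) ^ α) = 1 / (1 + R ^ α) ∧
    (1 / (1 + R)) ^ α /
        ((1 / (1 + R)) ^ α + (N : ℝ) * (R / ((N : ℝ) * (1 + R))) ^ α)
      = 1 / (1 + R ^ α / (N : ℝ) ^ (α - 1)) := by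
  have hR₀ : 0 ≤ R := by linarith
  have hS : 0 < 1 + R := by linarith
  have hN₀ : (0 : ℝ) < N := by exact_mod_cast hN
  constructor
  · rw [div_rpow hR₀ hS.le]
    exact one_div_rpow_div_add_div_rpow hS α _
  · rw [mul_rpow_div_mul hN₀ hR₀ hS.le]
    exact one_div_rpow_div_add_div_rpow hS α _

/-- For the base distribution `p(a,⋆) = 1/(1+R)`, `p(b,i) = R/(N(1+R))` for
`i = 1,…,N`, the locally sharpened probability of the event `A` (first token `a`)
is `1/(1+R^α)`, while the globally sharpened probability is
`1/(1 + R^α/N^(α-1))`. -/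
theorem local_vs_global_sharpening (R : ℝ) (N : ℕ) (α : ℝ)
    (hR : 1 < R) (hN : 1 ≤ N) (hα : 1 < α) :
    (1 / (1 + R)) ^ α / ((1 / (1 + R)) ^ α + (R / (1 + R)) ^ α) = 1 / (1 + R ^ α) ∧
    (1 / (1 + R)) ^ α /
        ((1 / (1 + R)) ^ α + (N : ℝ) * (R / ((N : ℝ) * (1 + R))) ^ α)
      = 1 / (1 + R ^ α / (N : ℝ) ^ (α - 1)) :=
  local_vs_global_sharpening_general R N α hR hN
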